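/- For every S > 0, the Black–Scholes call price satisfies the initial condition lim_{τ→0⁺} V_BS(τ, S) = max(S − K, 0). -/

import Mathlib

open MeasureTheory Filter Real

/-- The standard normal cumulative distribution function. -/
noncomputable def Phi (x : ℝ) : ℝ :=
  ∫ t in Set.Iic x, Real.exp (-t ^ 2 / 2) / Real.sqrt (2 * Real.pi)

/-- The standard normal density. -/
noncomputable def phi (x : ℝ) : ℝ := Real.exp (-x ^ 2 / 2) / Real.sqrt (2 * Real.pi)


lemma phi_eq : phi = fun t : ℝ => Real.exp (-(1/2) * t ^ 2) / Real.sqrt (2 * Real.pi) := by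
  funext t; simp [phi]; ring_nf

lemma phi_nonneg (t : ℝ) : 0 ≤ phi t :=
  div_nonneg (Real.exp_nonneg _) (Real.sqrt_nonneg _)

lemma phi_integrable : Integrable phi := by
  rw [phi_eq]
  exact (integrable_exp_neg_mul_sq (by norm_num : (0:ℝ) < 1/2)).div_const _

lemma sqrt_two_pi_pos : 0 < Real.sqrt (2 * Real.pi) :=
  Real.sqrt_pos.2 (by positivity)

lemma integral_phi : ∫ t, phi t = 1 := by
  rw [phi_eq]
  rw [MeasureTheory.integral_div]
  rw [integral_gaussian]
  rw [show Real.pi / (1/2) = 2 * Real.pi by ring]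
  exact div_self sqrt_two_pi_pos.ne'

lemma Phi_eq (x : ℝ) : Phi x = ∫ t in Set.Iic x, phi t := rfl

lemma continuous_Phi : Continuous Phi := by
  have h : ∀ x : ℝ, Phi x = (∫ t in (0:ℝ)..x, phi t) + Phi 0 := by
    intro x
    have := intervalIntegral.integral_Iic_sub_Iic
      (phi_integrable.integrableOn (s := Set.Iic 0)) (phi_integrable.integrableOn (s := Set.Iic x))
    rw [Phi_eq, Phi_eq]; linarith
  rw [show Phi = _ from funext h]
  exact (phi_integrable.continuous_primitive 0).add continuous_const

lemma Phi_zero : Phi 0 = 1/2 := by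
  have h1 : Phi 0 + ∫ t in Set.Ioi (0:ℝ), phi t = 1 := by
    rw [Phi_eq, intervalIntegral.integral_Iic_add_Ioi phi_integrable.integrableOn
      phi_integrable.integrableOn, integral_phi]
  have h2 : ∫ t in Set.Ioi (0:ℝ), phi t = Phi 0 := by
    rw [Phi_eq]
    have h := integral_comp_neg_Ioi (0:ℝ) phi
    simp only [neg_zero] at h
    rw [← h]
    congr 1; funext t; simp [phi]
  rw [h2] at h1; linarith

lemma Phi_tendsto_atTop : Tendsto Phi atTop (nhds 1) := by
  have : ∀ x : ℝ, Phi x = ∫ t, Set.indicator (Set.Iic x) phi t := by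
    intro x
    rw [Phi_eq, MeasureTheory.integral_indicator measurableSet_Iic]
  rw [funext this, show (1:ℝ) = ∫ t, phi t from integral_phi.symm]
  apply MeasureTheory.tendsto_integral_filter_of_dominated_convergence phi
  · exact Eventually.of_forall fun x =>
      (phi_integrable.aestronglyMeasurable.indicator measurableSet_Iic)
  · refine Eventually.of_forall fun x => Eventually.of_forall fun t => ?_
    rw [Real.norm_eq_abs, abs_of_nonneg (Set.indicator_nonneg (fun a _ => phi_nonneg a) t)]
    exact Set.indicator_le_self' (fun a _ => phi_nonneg a) t
  · exact phi_integrable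
  · refine Eventually.of_forall fun t => ?_
    refine Tendsto.congr' ?_ tendsto_const_nhds
    filter_upwards [eventually_ge_atTop t] with x hx
    simp [Set.indicator_of_mem (Set.mem_Iic.2 hx)]

lemma Phi_tendsto_atBot : Tendsto Phi atBot (nhds 0) := by
  have : ∀ x : ℝ, Phi x = ∫ t, Set.indicator (Set.Iic x) phi t := by
    intro x
    rw [Phi_eq, MeasureTheory.integral_indicator measurableSet_Iic]
  rw [funext this, show (0:ℝ) = ∫ _t : ℝ, (0:ℝ) ∂volume by simp]
  apply MeasureTheory.tendsto_integral_filter_of_dominated_convergence phi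
  · exact Eventually.of_forall fun x =>
      (phi_integrable.aestronglyMeasurable.indicator measurableSet_Iic)
  · refine Eventually.of_forall fun x => Eventually.of_forall fun t => ?_
    rw [Real.norm_eq_abs, abs_of_nonneg (Set.indicator_nonneg (fun a _ => phi_nonneg a) t)]
    exact Set.indicator_le_self' (fun a _ => phi_nonneg a) t
  · exact phi_integrable
  · refine Eventually.of_forall fun t => ?_
    refine Tendsto.congr' ?_ tendsto_const_nhds
    filter_upwards [eventually_lt_atBot t] with x hx
    simp [Set.indicator_of_notMem (fun h => absurd (Set.mem_Iic.1 h) (not_le.2 hx))]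

/-- The Black–Scholes `d₁`. -/
noncomputable def d1 (σ r K τ S : ℝ) : ℝ :=
  (Real.log (S / K) + (r + σ ^ 2 / 2) * τ) / (σ * Real.sqrt τ)

/-- The Black–Scholes `d₂`. -/
noncomputable def d2 (σ r K τ S : ℝ) : ℝ := d1 σ r K τ S - σ * Real.sqrt τ

/-- The Black–Scholes price of a European call with volatility `σ`, interest rate `r`,
strike `K`, time to maturity `τ` and asset price `S`. -/
noncomputable def Vbs (σ r K τ S : ℝ) : ℝ :=
  S * Phi (d1 σ r K τ S) - K * Real.exp (-r * τ) * Phi (d2 σ r K τ S)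

/-- Initial condition (10): for every `S > 0`,
`V_BS(τ, S) → max (S − K) 0` as `τ → 0⁺`. -/
theorem stmt10 (σ r K : ℝ) (hσ : 0 < σ) (hK : 0 < K) :
    ∀ S > (0:ℝ),
      Filter.Tendsto (fun τ => Vbs σ r K τ S) (nhdsWithin 0 (Set.Ioi 0))
        (nhds (max (S - K) 0)) := by
  intro S hS
  set l := nhdsWithin (0:ℝ) (Set.Ioi 0) with hl
  have hsqrt0 : Tendsto (fun τ : ℝ => σ * Real.sqrt τ) l (nhds 0) := by
    have h0 : Tendsto Real.sqrt (nhds 0) (nhds 0) := by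
      simpa using Real.continuous_sqrt.tendsto 0
    simpa using tendsto_const_nhds.mul (h0.mono_left nhdsWithin_le_nhds)
  have hsqrt : Tendsto (fun τ : ℝ => σ * Real.sqrt τ) l (nhdsWithin 0 (Set.Ioi 0)) := by
    rw [tendsto_nhdsWithin_iff]
    refine ⟨hsqrt0, ?_⟩
    filter_upwards [self_mem_nhdsWithin] with τ hτ
    exact mul_pos hσ (Real.sqrt_pos.2 hτ)
  have hexp : Tendsto (fun τ : ℝ => Real.exp (-r * τ)) l (nhds 1) := by
    have : Continuous fun τ : ℝ => Real.exp (-r * τ) := by continuity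
    simpa using (this.tendsto 0).mono_left nhdsWithin_le_nhds
  have hnum : Tendsto (fun τ : ℝ => Real.log (S / K) + (r + σ ^ 2 / 2) * τ) l
      (nhds (Real.log (S / K))) := by
    have : Continuous fun τ : ℝ => Real.log (S / K) + (r + σ ^ 2 / 2) * τ := by continuity
    simpa using (this.tendsto 0).mono_left nhdsWithin_le_nhds
  have hd1eq : (fun τ => d1 σ r K τ S)
      = fun τ => (σ * Real.sqrt τ)⁻¹ * (Real.log (S / K) + (r + σ ^ 2 / 2) * τ) := by
    funext τ; rw [d1, div_eq_inv_mul]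
  rcases lt_trichotomy S K with h | h | h
  · -- S < K
    have hL : Real.log (S / K) < 0 := Real.log_neg (div_pos hS hK) ((div_lt_one hK).2 h)
    have hd1 : Tendsto (fun τ => d1 σ r K τ S) l atBot := by
      rw [hd1eq]
      exact hsqrt.inv_tendsto_nhdsGT_zero.atTop_mul_neg hL hnum
    have hd2 : Tendsto (fun τ => d2 σ r K τ S) l atBot := by
      refine tendsto_atBot_mono (fun τ => ?_) hd1
      simp only [d2]
      have : 0 ≤ σ * Real.sqrt τ := mul_nonneg hσ.le (Real.sqrt_nonneg _)
      linarith
    have hP1 : Tendsto (fun τ => Phi (d1 σ r K τ S)) l (nhds 0) :=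
      Phi_tendsto_atBot.comp hd1
    have hP2 : Tendsto (fun τ => Phi (d2 σ r K τ S)) l (nhds 0) :=
      Phi_tendsto_atBot.comp hd2
    have hmax : max (S - K) 0 = 0 := max_eq_right (by linarith)
    rw [hmax]
    have := ((tendsto_const_nhds (x := S)).mul hP1).sub (((tendsto_const_nhds (x := K)).mul hexp).mul hP2)
    simp only [mul_zero, mul_one, sub_zero] at this
    simpa [Vbs] using this
  · -- S = K
    have hlog : Real.log (S / K) = 0 := by rw [h, div_self hK.ne', Real.log_one]
    have hd1 : Tendsto (fun τ => d1 σ r K τ S) l (nhds 0) := by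
      have haux : Tendsto (fun τ : ℝ => (r + σ ^ 2 / 2) / σ * Real.sqrt τ) l (nhds 0) := by
        have h0 : Tendsto Real.sqrt (nhds 0) (nhds 0) := by
          simpa using Real.continuous_sqrt.tendsto 0
        simpa using tendsto_const_nhds.mul (h0.mono_left nhdsWithin_le_nhds)
      refine Tendsto.congr' ?_ haux
      filter_upwards [self_mem_nhdsWithin] with τ hτ
      have hτ0 : (0:ℝ) < τ := hτ
      have hsτ : 0 < Real.sqrt τ := Real.sqrt_pos.2 hτ0
      rw [d1, hlog, zero_add]
      rw [show τ = Real.sqrt τ * Real.sqrt τ from (Real.mul_self_sqrt hτ0.le).symm]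
      field_simp
      ring_nf
      rw [Real.sq_sqrt hτ0.le, Real.sq_sqrt hτ0.le]
    have hd2 : Tendsto (fun τ => d2 σ r K τ S) l (nhds 0) := by
      have := hd1.sub hsqrt0
      simpa [d2] using this
    have hP1 : Tendsto (fun τ => Phi (d1 σ r K τ S)) l (nhds (1/2)) := by
      have := (continuous_Phi.tendsto 0).comp hd1
      rwa [Phi_zero] at this
    have hP2 : Tendsto (fun τ => Phi (d2 σ r K τ S)) l (nhds (1/2)) := by
      have := (continuous_Phi.tendsto 0).comp hd2
      rwa [Phi_zero] at this
    have hmax : max (S - K) 0 = 0 := max_eq_right (by rw [h]; linarith)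
    rw [hmax]
    have := ((tendsto_const_nhds (x := S)).mul hP1).sub (((tendsto_const_nhds (x := K)).mul hexp).mul hP2)
    have h0 : S * (1/2) - K * 1 * (1/2) = 0 := by rw [h]; ring
    rw [h0] at this
    simpa [Vbs] using this
  · -- S > K
    have hL : 0 < Real.log (S / K) := Real.log_pos ((one_lt_div hK).2 h)
    have hd1 : Tendsto (fun τ => d1 σ r K τ S) l atTop := by
      rw [hd1eq]
      exact hsqrt.inv_tendsto_nhdsGT_zero.atTop_mul_pos hL hnum
    have hd2 : Tendsto (fun τ => d2 σ r K τ S) l atTop := by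
      have := hd1.atTop_add hsqrt0.neg
      simpa [d2, sub_eq_add_neg] using this
    have hP1 : Tendsto (fun τ => Phi (d1 σ r K τ S)) l (nhds 1) :=
      Phi_tendsto_atTop.comp hd1
    have hP2 : Tendsto (fun τ => Phi (d2 σ r K τ S)) l (nhds 1) :=
      Phi_tendsto_atTop.comp hd2
    have hmax : max (S - K) 0 = S - K := max_eq_left (by linarith)
    rw [hmax]
    have := ((tendsto_const_nhds (x := S)).mul hP1).sub (((tendsto_const_nhds (x := K)).mul hexp).mul hP2)
    simp only [mul_one] at this
    simpa [Vbs] using this
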